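/- For any prime p ≥ 5, the sum over k from 1 to (p-1)/2 of 1/(2k-1)^2 is congruent to 0 modulo p. -/

import Mathlib

/-!
Reduce modulo `p` inside `ℤ_[p]`: the sum is the image of a `p`-adic integer whose residue is
`∑ (2k+1)⁻²` in `ZMod p`. For `p = 2n + 1` the odd residues `1, 3, …, p - 2` and their negatives
`p - 1, p - 3, …, 2` exhaust the nonzero residues, so twice this residue is `∑ x⁻² = ∑ x² = 0`
over `ZMod p`, the last because `2 < p - 1`.
-/

open Finset

theorem Finset.sum_range_two_mul {M : Type*} [AddCommMonoid M] (g : ℕ → M) (n : ℕ) :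
    ∑ j ∈ range (2 * n), g j = ∑ k ∈ range n, (g (2 * k) + g (2 * k + 1)) := by
  induction n with
  | zero => simp
  | succ n ih => rw [Nat.mul_succ, sum_range_succ, sum_range_succ, ih, sum_range_succ, add_assoc]

namespace ZMod

theorem sum_univ_eq_sum_range {M : Type*} [AddCommMonoid M] (n : ℕ) [NeZero n]
    (f : ZMod n → M) : ∑ x, f x = ∑ j ∈ range n, f j :=
  sum_bij' (fun x _ => x.val) (fun j _ => j) (fun x _ => mem_range.mpr x.val_lt)
    (fun _ _ => mem_univ _) (fun x _ => natCast_zmod_val x)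
    (fun _ hj => val_cast_of_lt (mem_range.mp hj)) (fun x _ => by rw [natCast_zmod_val])

theorem natCast_eq_neg_of_add_eq {n a b : ℕ} (h : a + b = n) : (a : ZMod n) = -b :=
  eq_neg_of_add_eq_zero_left (by rw [← Nat.cast_add, h, natCast_self])

theorem sum_univ_eq_add_sum_range_odd_add_self {M : Type*} [AddCommMonoid M] {n : ℕ}
    {f : ZMod (2 * n + 1) → M} (hf : f.Even) :
    ∑ x, f x = f 0 + (∑ k ∈ range n, f (2 * k + 1 : ℕ) + ∑ k ∈ range n, f (2 * k + 1 : ℕ)) := by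
  have heven : ∑ k ∈ range n, f (2 * k + 2 : ℕ) = ∑ k ∈ range n, f (2 * k + 1 : ℕ) := by
    rw [← sum_range_reflect (fun k => f (2 * k + 1 : ℕ))]
    refine sum_congr rfl fun k hk => ?_
    have hk : k < n := mem_range.mp hk
    rw [natCast_eq_neg_of_add_eq (a := 2 * (n - 1 - k) + 1) (b := 2 * k + 2) (by omega), hf]
  rw [sum_univ_eq_sum_range, sum_range_succ', sum_range_two_mul, sum_add_distrib, heven,
    Nat.cast_zero, add_comm]

theorem sum_range_inv_odd_pow_eq_zero {p : ℕ} [Fact p.Prime] {m : ℕ} (hm : Even m) (hm0 : m ≠ 0)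
    (hmp : m < p - 1) :
    ∑ k ∈ range ((p - 1) / 2), ((2 * k + 1 : ℕ) : ZMod p)⁻¹ ^ m = 0 := by
  obtain ⟨n, rfl⟩ : Odd p := (Fact.out : p.Prime).odd_of_ne_two (by omega)
  have hn : (2 * n + 1 - 1) / 2 = n := by omega
  have hsum := sum_univ_eq_add_sum_range_odd_add_self (f := fun x : ZMod (2 * n + 1) => x⁻¹ ^ m)
    (fun x => by simp only [inv_neg, hm.neg_pow])
  have hinv : ∑ x : ZMod (2 * n + 1), x⁻¹ ^ m = ∑ x : ZMod (2 * n + 1), x ^ m :=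
    Equiv.sum_comp (Equiv.inv _) (· ^ m)
  rw [hinv, FiniteField.sum_pow_lt_card_sub_one (K := ZMod _) m (by rwa [card]), inv_zero,
    zero_pow hm0, zero_add, eq_comm, add_self_eq_zero_iff_eq_zero (odd_two_mul_add_one n)] at hsum
  rwa [hn]

end ZMod

namespace PadicInt

variable {p : ℕ} [Fact p.Prime]

theorem isUnit_iff_toZMod_ne_zero {x : ℤ_[p]} : IsUnit x ↔ toZMod x ≠ 0 := by
  rw [← IsLocalRing.notMem_maximalIdeal, ← ker_toZMod, RingHom.mem_ker]

theorem norm_le_inv_of_toZMod_eq_zero {x : ℤ_[p]} (hx : toZMod x = 0) :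
    ‖x‖ ≤ (p : ℝ) ^ (-1 : ℤ) := by
  rw [norm_le_pow_iff_norm_lt_pow_add_one, neg_add_cancel, zpow_zero, ← not_isUnit_iff,
    isUnit_iff_toZMod_ne_zero, not_not]
  exact hx

theorem toZMod_ringInverse (x : ℤ_[p]) : toZMod (Ring.inverse x) = (toZMod x)⁻¹ := by
  by_cases hx : IsUnit x
  · lift x to ℤ_[p]ˣ using hx
    rw [Ring.inverse_unit, map_units_inv]
  · rw [Ring.inverse_non_unit x hx, map_zero, not_not.mp (isUnit_iff_toZMod_ne_zero.not.mp hx),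
      inv_zero]

theorem coe_ringInverse {x : ℤ_[p]} (hx : IsUnit x) :
    ((Ring.inverse x : ℤ_[p]) : ℚ_[p]) = (x : ℚ_[p])⁻¹ := by
  lift x to ℤ_[p]ˣ using hx
  rw [Ring.inverse_unit]
  exact map_units_inv (Coe.ringHom (p := p)) x

end PadicInt

theorem padicNorm_sum_inv_pow_le {p : ℕ} [Fact p.Prime] {ι : Type*} (s : Finset ι) (a : ι → ℕ)
    (m : ℕ) (ha : ∀ i ∈ s, (a i : ZMod p) ≠ 0) (h : ∑ i ∈ s, (a i : ZMod p)⁻¹ ^ m = 0) :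
    padicNorm p (∑ i ∈ s, (a i : ℚ)⁻¹ ^ m) ≤ (p : ℚ) ^ (-1 : ℤ) := by
  set x : ℤ_[p] := ∑ i ∈ s, Ring.inverse (a i : ℤ_[p]) ^ m
  have hx : PadicInt.toZMod x = 0 := by
    simpa only [x, map_sum, map_pow, PadicInt.toZMod_ringInverse, map_natCast] using h
  have hcoe : (x : ℚ_[p]) = ((∑ i ∈ s, (a i : ℚ)⁻¹ ^ m : ℚ) : ℚ_[p]) := by
    rw [PadicInt.coe_sum, Rat.cast_sum]
    refine sum_congr rfl fun i hi => ?_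
    have hunit : IsUnit (a i : ℤ_[p]) := by
      rw [PadicInt.isUnit_iff_toZMod_ne_zero, map_natCast]
      exact ha i hi
    rw [PadicInt.coe_pow, PadicInt.coe_ringInverse hunit, PadicInt.coe_natCast,
      Rat.cast_pow, Rat.cast_inv, Rat.cast_natCast]
  rw [← Rat.cast_le (K := ℝ), ← Padic.eq_padicNorm, ← hcoe, PadicInt.padic_norm_e_of_padicInt,
    Rat.cast_zpow, Rat.cast_natCast]
  exact PadicInt.norm_le_inv_of_toZMod_eq_zero hx

theorem stmt14 (p : ℕ) (hp : p.Prime) (hp5 : 5 ≤ p) :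
    padicNorm p (∑ k ∈ Finset.Icc 1 ((p - 1) / 2), (1 : ℚ) / (2 * (k : ℚ) - 1) ^ 2)
      ≤ (p : ℚ) ^ (-1 : ℤ) := by
  have : Fact p.Prime := ⟨hp⟩
  have hsum : ∑ k ∈ Icc 1 ((p - 1) / 2), (1 : ℚ) / (2 * (k : ℚ) - 1) ^ 2
      = ∑ k ∈ range ((p - 1) / 2), ((2 * k + 1 : ℕ) : ℚ)⁻¹ ^ 2 := by
    rw [← Ico_add_one_right_eq_Icc, sum_Ico_eq_sum_range, Nat.add_sub_cancel]
    refine sum_congr rfl fun k _ => ?_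
    push_cast
    rw [one_div, inv_pow]
    ring
  rw [hsum]
  refine padicNorm_sum_inv_pow_le _ _ 2 (fun k hk => ?_)
    (ZMod.sum_range_inv_odd_pow_eq_zero even_two two_ne_zero (by omega))
  rw [Ne, ZMod.natCast_eq_zero_iff]
  exact Nat.not_dvd_of_pos_of_lt (by omega) (by have := mem_range.mp hk; omega)
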